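/- If a sequence δ_h^t (h = 1,…,H+1, t ≥ 1) satisfies δ_{H+1}^t = 0 and δ_h^t ≤ ∑_{j=1}^t α_t^j δ_{h+1}^j + C·log(t)/t for a constant C ≥ 0, where α_t^j are the weights from step size α_t = (H+1)/(H+t), then δ_h^t ≤ 3C·(H−h+1)·log(t)/t for all h and t ≥ 2. -/

import Mathlib

/-!
Write `m = H + 1 - h` for the distance to the last layer. Backward induction on `m` shows
`δ_h^t ≤ (m + m² / H) · C log t / t`: the weights satisfy `t ∑_j α_t^j / j ≤ 1 + 1/H`, and
`log j ≤ log t`, so one step of the recursion turns the coefficient `c` into `c (1 + 1/H) + 1`,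
which stays below `(m + 1) + (m + 1)² / H` as long as `m ≤ H`. Finally `m + m² / H ≤ 2m`.
-/

open Finset Real

def stepWeight (α : ℕ → ℝ) (t j : ℕ) : ℝ := α j * ∏ j' ∈ Ioc j t, (1 - α j')

namespace stepWeight

variable {α : ℕ → ℝ}

theorem nonneg (h0 : ∀ j, 0 ≤ α j) (h1 : ∀ j, 0 < j → α j ≤ 1) (t j : ℕ) :
    0 ≤ stepWeight α t j :=
  mul_nonneg (h0 j) <| prod_nonneg fun j' hj' ↦
    sub_nonneg.2 <| h1 j' <| (Nat.zero_le j).trans_lt (mem_Ioc.1 hj').1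

theorem self (t : ℕ) : stepWeight α t t = α t := by
  simp [stepWeight]

theorem succ_of_le {t j : ℕ} (hjt : j ≤ t) :
    stepWeight α (t + 1) j = stepWeight α t j * (1 - α (t + 1)) := by
  rw [stepWeight, stepWeight, prod_Ioc_succ_top hjt, mul_assoc]

theorem sum_succ (f : ℕ → ℝ) (t : ℕ) :
    ∑ j ∈ Icc 1 (t + 1), stepWeight α (t + 1) j * f j
      = (1 - α (t + 1)) * ∑ j ∈ Icc 1 t, stepWeight α t j * f j + α (t + 1) * f (t + 1) := by
  rw [sum_Icc_succ_top (by omega), self, mul_sum]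
  congr 1
  refine sum_congr rfl fun j hj ↦ ?_
  rw [succ_of_le (mem_Icc.1 hj).2]
  ring

theorem nonneg_of_eq_div {H : ℝ} (hH : 0 ≤ H) (hα : ∀ j, α j = (H + 1) / (H + j))
    (t j : ℕ) : 0 ≤ stepWeight α t j :=
  nonneg (fun j ↦ by rw [hα]; positivity) (fun j hj ↦ by
    have : (1 : ℝ) ≤ j := by exact_mod_cast hj
    rw [hα, div_le_one (by positivity)]
    linarith) t j

theorem mul_sum_div_le {H : ℝ} (hH : 0 < H) (hα : ∀ j, α j = (H + 1) / (H + j)) (t : ℕ) :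
    t * ∑ j ∈ Icc 1 t, stepWeight α t j / j ≤ 1 + 1 / H := by
  induction t with
  | zero => simp; positivity
  | succ t ih =>
    have hsum := sum_succ (α := α) (fun j ↦ (j : ℝ)⁻¹) t
    simp only [← div_eq_mul_inv] at hsum
    have hden : 0 < H + t + 1 := by positivity
    have hα' : α (t + 1) = (H + 1) / (H + t + 1) := by rw [hα]; push_cast; ring
    have h1α : 1 - α (t + 1) = t / (H + t + 1) := by rw [hα']; field_simp; ring
    calc ((t + 1 : ℕ) : ℝ) * ∑ j ∈ Icc 1 (t + 1), stepWeight α (t + 1) j / j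
        = (t + 1) / (H + t + 1) * (t * ∑ j ∈ Icc 1 t, stepWeight α t j / j)
            + (H + 1) / (H + t + 1) := by
          rw [hsum, h1α, hα']; push_cast; field_simp
      _ ≤ (t + 1) / (H + t + 1) * (1 + 1 / H) + (H + 1) / (H + t + 1) := by gcongr
      _ = 1 + 1 / H := by field_simp; ring

end stepWeight

theorem sum_mul_log_div_le_of_mul_sum_div_le {w : ℕ → ℝ} {t : ℕ} {A B : ℝ}
    (hw : ∀ j, 0 ≤ w j) (hA : 0 ≤ A) (ht : 1 ≤ t)
    (hs : t * ∑ j ∈ Icc 1 t, w j / j ≤ B) :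
    ∑ j ∈ Icc 1 t, w j * (A * log j / j) ≤ A * B * log t / t := by
  have htpos : (0 : ℝ) < t := by exact_mod_cast ht
  have hlog : 0 ≤ A * log t := mul_nonneg hA (log_natCast_nonneg t)
  calc ∑ j ∈ Icc 1 t, w j * (A * log j / j)
      ≤ ∑ j ∈ Icc 1 t, A * log t * (w j / j) := by
        refine sum_le_sum fun j hj ↦ ?_
        obtain ⟨hj1, hjt⟩ := mem_Icc.1 hj
        have hlogj : log j ≤ log t := log_le_log (by exact_mod_cast hj1) (by exact_mod_cast hjt)
        rw [mul_div_assoc', ← mul_div_assoc, mul_comm (w j)]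
        gcongr
        exact hw j
    _ = A * log t * (t * ∑ j ∈ Icc 1 t, w j / j) / t := by
        rw [← mul_sum]; field_simp
    _ ≤ A * log t * B / t := by gcongr
    _ = A * B * log t / t := by ring

theorem add_sq_div_mul_one_add_inv_add_one_le {H : ℝ} (hH : 0 < H) {m : ℕ} (hm : m ≤ H) :
    (m + m ^ 2 / H) * (1 + 1 / H) + 1 ≤ (m + 1) + (m + 1) ^ 2 / H := by
  have key : (m : ℝ) ^ 2 ≤ H * (m + 1) := by nlinarith [(m.cast_nonneg : (0 : ℝ) ≤ m)]
  rw [← sub_nonneg]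
  have : ((m + 1) + (m + 1) ^ 2 / H) - ((m + m ^ 2 / H) * (1 + 1 / H) + 1)
      = (H * (m + 1) - m ^ 2) / H ^ 2 := by field_simp; ring
  rw [this]
  exact div_nonneg (sub_nonneg.2 key) (sq_nonneg H)

theorem add_sq_div_le_two_mul {H : ℝ} (hH : 0 < H) {m : ℕ} (hm : m ≤ H) :
    m + m ^ 2 / H ≤ 2 * m := by
  have : (m : ℝ) ^ 2 / H ≤ m := by
    rw [div_le_iff₀ hH, sq]; exact mul_le_mul_of_nonneg_left hm m.cast_nonneg
  linarith

theorem le_of_weighted_backward_recursion {H : ℕ} (hH : (0 : ℝ) < H) {C : ℝ} (hC : 0 ≤ C)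
    {w : ℕ → ℕ → ℝ} (hw : ∀ t j, 0 ≤ w t j)
    (hws : ∀ t, t * ∑ j ∈ Icc 1 t, w t j / j ≤ 1 + 1 / (H : ℝ))
    {δ : ℕ → ℕ → ℝ} (hδ_top : ∀ t, δ (H + 1) t = 0)
    (hδ_rec : ∀ h ∈ Icc 1 H, ∀ t : ℕ, 1 ≤ t →
      δ h t ≤ ∑ j ∈ Icc 1 t, w t j * δ (h + 1) j + C * log t / t) :
    ∀ m ≤ H, ∀ t, 1 ≤ t →
      δ (H + 1 - m) t ≤ (m + m ^ 2 / (H : ℝ)) * (C * log t / t) := by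
  intro m
  induction m with
  | zero => simp [hδ_top]
  | succ m ih =>
    intro hm t ht
    have hmH : (m : ℝ) ≤ H := by exact_mod_cast (Nat.le_succ m).trans hm
    have hc : 0 ≤ (m + m ^ 2 / (H : ℝ)) * C := by positivity
    have hrec := hδ_rec (H + 1 - (m + 1)) (mem_Icc.2 ⟨by omega, by omega⟩) t ht
    rw [show H + 1 - (m + 1) + 1 = H + 1 - m by omega] at hrec
    have hL : 0 ≤ C * log t / t :=
      div_nonneg (mul_nonneg hC (log_natCast_nonneg t)) t.cast_nonneg
    calc δ (H + 1 - (m + 1)) t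
        ≤ ∑ j ∈ Icc 1 t, w t j * ((m + m ^ 2 / (H : ℝ)) * C * log j / j) + C * log t / t :=
          hrec.trans <| add_le_add_left (sum_le_sum fun j hj ↦ by
            rw [mul_assoc _ C, mul_div_assoc]
            exact mul_le_mul_of_nonneg_left (ih (by omega) j (mem_Icc.1 hj).1) (hw t j)) _
      _ ≤ (m + m ^ 2 / (H : ℝ)) * C * (1 + 1 / H) * log t / t + C * log t / t := by
          gcongr
          exact sum_mul_log_div_le_of_mul_sum_div_le (hw t) hc ht (hws t)
      _ = ((m + m ^ 2 / (H : ℝ)) * (1 + 1 / H) + 1) * (C * log t / t) := by ring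
      _ ≤ ((m + 1 : ℕ) + (m + 1 : ℕ) ^ 2 / (H : ℝ)) * (C * log t / t) := by
          push_cast
          exact mul_le_mul_of_nonneg_right (add_sq_div_mul_one_add_inv_add_one_le hH hmH) hL

theorem value_gap_recursion_general (H : ℕ) (hH : 1 ≤ H) (C : ℝ) (hC : 0 ≤ C)
    (α : ℕ → ℝ) (hα : ∀ j, α j = (H + 1) / (H + j))
    (αw : ℕ → ℕ → ℝ)
    (hαw : ∀ t j, αw t j = α j * ∏ j' ∈ Finset.Ioc j t, (1 - α j'))
    (δ : ℕ → ℕ → ℝ)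
    (hδ_top : ∀ t, δ (H + 1) t = 0)
    (hδ_rec : ∀ h ∈ Finset.Icc 1 H, ∀ t : ℕ, 1 ≤ t →
      δ h t ≤ ∑ j ∈ Finset.Icc 1 t, αw t j * δ (h + 1) j + C * Real.log t / t) :
    ∀ h ∈ Finset.Icc 1 (H + 1), ∀ t : ℕ, 2 ≤ t →
      δ h t ≤ 3 * C * ((H : ℝ) - h + 1) * Real.log t / t := by
  have hHpos : (0 : ℝ) < H := by exact_mod_cast hH
  obtain rfl : αw = stepWeight α := funext₂ hαw
  have bound := le_of_weighted_backward_recursion hHpos hC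
    (stepWeight.nonneg_of_eq_div hHpos.le hα) (stepWeight.mul_sum_div_le hHpos hα) hδ_top hδ_rec
  intro h hh t ht
  obtain ⟨hh1, hhH⟩ := mem_Icc.1 hh
  have hm : ((H + 1 - h : ℕ) : ℝ) = H - h + 1 := by
    rw [Nat.cast_sub hhH]; push_cast; ring
  have hmH : ((H + 1 - h : ℕ) : ℝ) ≤ H := by exact_mod_cast (by omega : H + 1 - h ≤ H)
  have hL : 0 ≤ C * log t / t := div_nonneg (mul_nonneg hC (log_natCast_nonneg t)) t.cast_nonneg
  calc δ h t = δ (H + 1 - (H + 1 - h)) t := by rw [Nat.sub_sub_self hhH]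
    _ ≤ _ := bound (H + 1 - h) (by omega) t (by omega)
    _ ≤ 3 * ((H + 1 - h : ℕ) : ℝ) * (C * log t / t) := by
        refine mul_le_mul_of_nonneg_right ?_ hL
        linarith [add_sq_div_le_two_mul hHpos hmH, (H + 1 - h).cast_nonneg (α := ℝ)]
    _ = 3 * C * ((H : ℝ) - h + 1) * log t / t := by rw [hm]; ring

/-- Backward induction for the weighted value-gap recursion: if `δ_{H+1}^t = 0` and
`δ_h^t ≤ ∑_{j=1}^t α_t^j δ_{h+1}^j + C log t / t`, then
`δ_h^t ≤ 3C (H−h+1) log t / t` for all `1 ≤ h ≤ H+1` and `t ≥ 2`. -/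
theorem value_gap_recursion (H : ℕ) (hH : 1 ≤ H) (C : ℝ) (hC : 0 ≤ C)
    (α : ℕ → ℝ) (hα : ∀ j, α j = (H + 1) / (H + j))
    (αw : ℕ → ℕ → ℝ)
    (hαw : ∀ t j, αw t j = α j * ∏ j' ∈ Finset.Ioc j t, (1 - α j'))
    (δ : ℕ → ℕ → ℝ)
    (hδ_nonneg : ∀ h t, 0 ≤ δ h t)
    (hδ_top : ∀ t, δ (H + 1) t = 0)
    (hδ_rec : ∀ h ∈ Finset.Icc 1 H, ∀ t : ℕ, 1 ≤ t →
      δ h t ≤ ∑ j ∈ Finset.Icc 1 t, αw t j * δ (h + 1) j + C * Real.log t / t) :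
    ∀ h ∈ Finset.Icc 1 (H + 1), ∀ t : ℕ, 2 ≤ t →
      δ h t ≤ 3 * C * ((H : ℝ) - h + 1) * Real.log t / t :=
  value_gap_recursion_general H hH C hC α hα αw hαw δ hδ_top hδ_rec
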